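/- arXiv:2603.00642 — 8 statements merged into one kernel-verified Lean document; each statement's English description precedes it below -/
import Mathlib

section
/- For every natural number n ≥ 1 and every natural number y, one has y ≤ 2^(2^n) if and only if there exist natural numbers y₁, y₂, y₄ with y₁ ≤ 2^(2^(n-1)), y₄ ≤ 2^(2^(n-1)), y₂ < y₁, and y = y₁ * y₂ + y₄. -/
/-!
Squaring `B = 2 ^ 2 ^ (n - 1)` gives `2 ^ 2 ^ n`, so it suffices to show that `y ≤ B * B` exactly
when `y = y₁ * y₂ + y₄` with `y₁, y₄ ≤ B` and `y₂ < y₁`. Such a sum is at most `B * (B - 1) + B = B * B`;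
conversely `y < B * B` is its division by `B` with remainder, and `B * B` itself is `B * (B - 1) + B`.
-/

namespace Nat

theorem mul_add_le_mul_self {B y₁ y₂ y₄ : ℕ} (h₁ : y₁ ≤ B) (h₄ : y₄ ≤ B) (h₂₁ : y₂ < y₁) :
    y₁ * y₂ + y₄ ≤ B * B :=
  calc y₁ * y₂ + y₄ ≤ B * (B - 1) + B := add_le_add (Nat.mul_le_mul h₁ (by omega)) h₄
    _ = B * B := by rw [Nat.mul_sub_one]; have := Nat.le_mul_self B; omega

theorem exists_mul_add_of_le_mul_self {B y : ℕ} (hB : 0 < B) (hy : y ≤ B * B) :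
    ∃ y₁ y₂ y₄ : ℕ, y₁ ≤ B ∧ y₄ ≤ B ∧ y₂ < y₁ ∧ y = y₁ * y₂ + y₄ := by
  obtain rfl | hlt := hy.eq_or_lt
  · refine ⟨B, B - 1, B, le_rfl, le_rfl, Nat.sub_one_lt hB.ne', ?_⟩
    rw [Nat.mul_sub_one]
    have := Nat.le_mul_self B
    omega
  · exact ⟨B, y / B, y % B, le_rfl, (Nat.mod_lt y hB).le, Nat.div_lt_of_lt_mul hlt,
      (Nat.div_add_mod y B).symm⟩

theorem le_mul_self_iff_exists_mul_add {B y : ℕ} (hB : 0 < B) :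
    y ≤ B * B ↔ ∃ y₁ y₂ y₄ : ℕ, y₁ ≤ B ∧ y₄ ≤ B ∧ y₂ < y₁ ∧ y = y₁ * y₂ + y₄ :=
  ⟨exists_mul_add_of_le_mul_self hB, fun ⟨_, _, _, h₁, h₄, h₂₁, hy⟩ =>
    hy ▸ mul_add_le_mul_self h₁ h₄ h₂₁⟩

end Nat

theorem pow_two_pow_succ {M : Type*} [Monoid M] (a : M) (n : ℕ) :
    a ^ 2 ^ (n + 1) = a ^ 2 ^ n * a ^ 2 ^ n := by
  rw [pow_succ, pow_mul, sq]

theorem bounded_mul_decomposition (n : ℕ) (hn : 1 ≤ n) (y : ℕ) :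
    y ≤ 2 ^ (2 ^ n) ↔
      ∃ y₁ y₂ y₄ : ℕ, y₁ ≤ 2 ^ (2 ^ (n - 1)) ∧ y₄ ≤ 2 ^ (2 ^ (n - 1)) ∧
        y₂ < y₁ ∧ y = y₁ * y₂ + y₄ := by
  obtain ⟨m, rfl⟩ := Nat.exists_eq_add_of_le' hn
  rw [Nat.add_sub_cancel, pow_two_pow_succ]
  exact Nat.le_mul_self_iff_exists_mul_add (by positivity)
end

section
/- Let M be a PrA⁻-structure. Then the map φ : ℕ → M given by φ(n) = n • one is injective, satisfies φ(0) = 0, φ(1) = one and φ(m + n) = φ(m) + φ(n), and its image is an initial segment of M: for all n : ℕ and x : M, if x ≤ n • one then there exists m ≤ n with x = m • one. -/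
/-- A model of the theory `PrA⁻`: an additive cancellative commutative monoid with
a distinguished element `one` satisfying the `PrA⁻` axioms. -/
structure PrAMinus (M : Type*) [AddCancelCommMonoid M] where
  one : M
  succ_ne_zero : ∀ x : M, x + one ≠ 0
  exists_pred : ∀ x : M, x ≠ 0 → ∃ y : M, x = y + one
  total : ∀ x y : M, (∃ z, x + z = y) ∨ (∃ z, y + z = x)

lemma prAMinus_nsmul_eq_zero {M : Type*} [AddCancelCommMonoid M]
    (S : PrAMinus M) {k : ℕ} (h : k • S.one = 0) : k = 0 := by
  cases k with
  | zero => rfl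
  | succ j =>
    exfalso
    exact S.succ_ne_zero (j • S.one) (by simpa [succ_nsmul] using h)

theorem prAMinus_standard_initial_segment {M : Type*} [AddCancelCommMonoid M]
    (S : PrAMinus M) :
    Function.Injective (fun n : ℕ => n • S.one) ∧
      (0 : ℕ) • S.one = 0 ∧
      (1 : ℕ) • S.one = S.one ∧
      (∀ m n : ℕ, (m + n) • S.one = m • S.one + n • S.one) ∧
      (∀ (n : ℕ) (x : M), (∃ z, x + z = n • S.one) → ∃ m ≤ n, x = m • S.one) := by
  refine ⟨?_, zero_nsmul _, one_nsmul _, fun m n => add_nsmul _ _ _, ?_⟩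
  · intro a b hab
    simp only at hab
    rcases le_total a b with h | h
    · obtain ⟨c, rfl⟩ := Nat.exists_eq_add_of_le h
      rw [add_nsmul, left_eq_add] at hab
      have := prAMinus_nsmul_eq_zero S hab
      omega
    · obtain ⟨c, rfl⟩ := Nat.exists_eq_add_of_le h
      rw [add_nsmul, add_eq_left] at hab
      have := prAMinus_nsmul_eq_zero S hab
      omega
  · intro n
    induction n with
    | zero =>
      rintro x ⟨z, hz⟩
      refine ⟨0, le_refl _, ?_⟩
      rw [zero_nsmul]
      by_contra hx
      rw [zero_nsmul] at hz
      obtain ⟨y, rfl⟩ := S.exists_pred x hx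
      exact S.succ_ne_zero (y + z) (by rw [← hz, add_right_comm])
    | succ n ih =>
      rintro x ⟨z, hz⟩
      by_cases hx : x = 0
      · exact ⟨0, Nat.zero_le _, by simp [hx]⟩
      · obtain ⟨y, rfl⟩ := S.exists_pred x hx
        have hy : y + z = n • S.one := by
          rw [succ_nsmul] at hz
          apply add_right_cancel (b := S.one)
          rw [← hz, add_right_comm]
        obtain ⟨m, hm, rfl⟩ := ih y ⟨z, hy⟩
        exact ⟨m + 1, by omega, by rw [succ_nsmul]⟩
end

section
/- Let M be a PrA⁻-structure, Mul its bounded-multiplication relation, and n : ℕ. Then an element y : M satisfies Hyp n y if and only if there exists a natural number m ≤ 2^(2^n) with y = m • one. -/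
/-- The strict order `x < y` of a `PrA⁻`-model: `∃ z ≠ 0, x + z = y`. -/
def PrAMinus.Lt {M : Type*} [AddCancelCommMonoid M] (_ : PrAMinus M) (x y : M) : Prop :=
  ∃ z : M, z ≠ 0 ∧ x + z = y

/-- The bounded-multiplication relation `Mul n x y z` of a `PrA⁻`-model. -/
def PrAMinus.Mul {M : Type*} [AddCancelCommMonoid M] (S : PrAMinus M) :
    ℕ → M → M → M → Prop
  | 0, x, y, z =>
      (y = 0 ∧ z = 0) ∨ (y = S.one ∧ z = x) ∨ (y = S.one + S.one ∧ z = x + x)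
  | n + 1, x, y, z =>
      ∃ y₁ y₂ y₃ y₄ z₁ z₂ z₄ : M,
        y = y₃ + y₄ ∧ S.Mul n y₁ y₂ y₃ ∧ S.Mul n x y₁ z₁ ∧ S.Mul n z₁ y₂ z₂ ∧
          S.Mul n x y₄ z₄ ∧ z = z₂ + z₄ ∧ S.Lt y₂ y₁

/-- The predicate `Hyp n y` of a `PrA⁻`-model. -/
def PrAMinus.Hyp {M : Type*} [AddCancelCommMonoid M] (S : PrAMinus M) (n : ℕ) (y : M) :
    Prop :=
  S.Mul n S.one y y ∧ S.Mul n 0 y 0 ∧ (∀ x : M, ∃! z : M, S.Mul n x y z) ∧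
    ∀ x₀ x₁ x₂ : M, x₀ = x₁ + x₂ →
      ∃ z₀ z₁ z₂ : M, S.Mul n x₁ y z₁ ∧ S.Mul n x₂ y z₂ ∧ S.Mul n x₀ y z₀ ∧ z₀ = z₁ + z₂

/-!
By induction on `n`, `Mul n x y z` holds exactly when `y = m • one` and `z = m • x` for a
standard `m ≤ 2 ^ 2 ^ n`. The recursive clause writes `y = y₂ * y₁ + y₄` with `y₂ < y₁` and
`y₁, y₂, y₄ ≤ N := 2 ^ 2 ^ n`, and by division with remainder these numbers are exactly the
`m ≤ N * N`. Since `k ↦ k • one` is injective in a model of `PrA⁻`, such an `m` is determined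
by `y`, so all four clauses of `Hyp n y` hold as soon as `y` is a standard multiple of `one`.
-/

lemma Nat.le_mul_self_iff_exists_mul_add_s4 {N m : ℕ} (hN : 0 < N) :
    m ≤ N * N ↔ ∃ a b c, a ≤ N ∧ b < a ∧ c ≤ N ∧ m = b * a + c := by
  constructor
  · intro hm
    rcases hm.lt_or_eq with hlt | rfl
    · exact ⟨N, m / N, m % N, le_rfl, Nat.div_lt_of_lt_mul hlt, (Nat.mod_lt m hN).le,
        (Nat.div_add_mod' m N).symm⟩
    · obtain ⟨k, rfl⟩ := Nat.exists_eq_add_one_of_ne_zero hN.ne'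
      exact ⟨k + 1, k, k + 1, le_rfl, k.lt_add_one, le_rfl, by ring⟩
  · rintro ⟨a, b, c, ha, hba, hc, rfl⟩
    calc b * a + c ≤ b * N + N := add_le_add (Nat.mul_le_mul_left b ha) hc
      _ = (b + 1) * N := by ring
      _ ≤ N * N := Nat.mul_le_mul_right N (hba.trans_le ha)

namespace PrAMinus

variable {M : Type*} [AddCancelCommMonoid M] (S : PrAMinus M)

lemma nsmul_one_add_eq_zero {k : ℕ} {c : M} (h : k • S.one + c = 0) : k = 0 := by
  cases k with
  | zero => rfl
  | succ k => exact absurd h (by rw [succ_nsmul, add_right_comm]; exact S.succ_ne_zero _)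

lemma not_lt_self (x : M) : ¬S.Lt x x := fun ⟨_, hz, h⟩ => hz (add_eq_left.mp h)

lemma nsmul_one_lt_nsmul_one_iff {a b : ℕ} : S.Lt (a • S.one) (b • S.one) ↔ a < b := by
  constructor
  · rintro ⟨c, hc, h⟩
    by_contra! hba
    obtain ⟨d, rfl⟩ := Nat.exists_eq_add_of_le hba
    rw [add_nsmul, add_assoc] at h
    have h0 : d • S.one + c = 0 := add_eq_left.mp h
    obtain rfl := S.nsmul_one_add_eq_zero h0
    exact hc (by simpa using h0)
  · intro h
    obtain ⟨d, rfl⟩ := Nat.exists_eq_add_of_lt h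
    refine ⟨(d + 1) • S.one, fun h0 => d.succ_ne_zero (S.nsmul_one_add_eq_zero (c := 0) ?_), ?_⟩
    · rwa [add_zero]
    · rw [← add_nsmul, add_assoc]

lemma nsmul_one_injective : Function.Injective fun k : ℕ => k • S.one := by
  intro a b (h : a • S.one = b • S.one)
  by_contra hab
  rcases Nat.lt_or_gt_of_ne hab with hlt | hlt <;>
  · have hlt' := S.nsmul_one_lt_nsmul_one_iff.mpr hlt
    rw [h] at hlt'
    exact S.not_lt_self _ hlt'

lemma mul_zero_iff (x y z : M) :
    S.Mul 0 x y z ↔ ∃ m : ℕ, m ≤ 2 ∧ y = m • S.one ∧ z = m • x := by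
  rw [Mul]
  constructor
  · rintro (⟨rfl, rfl⟩ | ⟨rfl, rfl⟩ | ⟨rfl, rfl⟩)
    · exact ⟨0, by norm_num, by simp, by simp⟩
    · exact ⟨1, by norm_num, by simp, by simp⟩
    · exact ⟨2, le_rfl, by rw [two_nsmul], by rw [two_nsmul]⟩
  · rintro ⟨m, hm, rfl, rfl⟩
    interval_cases m
    · simp
    · simp
    · simp [two_nsmul]

lemma mul_succ_iff {n N : ℕ}
    (ih : ∀ x y z : M, S.Mul n x y z ↔ ∃ m : ℕ, m ≤ N ∧ y = m • S.one ∧ z = m • x)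
    (x y z : M) :
    S.Mul (n + 1) x y z ↔ ∃ a b c : ℕ, a ≤ N ∧ b < a ∧ c ≤ N ∧
      y = (b * a + c) • S.one ∧ z = (b * a + c) • x := by
  simp only [Mul, ih]
  constructor
  · rintro ⟨_, _, _, _, _, _, _, rfl, ⟨b, -, hy₂, rfl⟩, ⟨a, ha, rfl, rfl⟩, ⟨b', -, hy₂', rfl⟩,
      ⟨c, hc, rfl, rfl⟩, rfl, hlt⟩
    obtain rfl : b = b' := S.nsmul_one_injective (hy₂.symm.trans hy₂')
    rw [hy₂, S.nsmul_one_lt_nsmul_one_iff] at hlt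
    exact ⟨a, b, c, ha, hlt, hc, by rw [add_nsmul, smul_smul], by rw [add_nsmul, smul_smul]⟩
  · rintro ⟨a, b, c, ha, hba, hc, rfl, rfl⟩
    exact ⟨a • S.one, b • S.one, (b * a) • S.one, c • S.one, a • x, (b * a) • x, c • x,
      add_nsmul .., ⟨b, (hba.trans_le ha).le, rfl, (smul_smul ..).symm⟩, ⟨a, ha, rfl, rfl⟩,
      ⟨b, (hba.trans_le ha).le, rfl, (smul_smul ..).symm⟩, ⟨c, hc, rfl, rfl⟩, add_nsmul ..,
      S.nsmul_one_lt_nsmul_one_iff.mpr hba⟩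

theorem mul_iff (n : ℕ) (x y z : M) :
    S.Mul n x y z ↔ ∃ m : ℕ, m ≤ 2 ^ 2 ^ n ∧ y = m • S.one ∧ z = m • x := by
  induction n generalizing x y z with
  | zero => exact S.mul_zero_iff x y z
  | succ n ih =>
    rw [S.mul_succ_iff ih, pow_succ, pow_mul, sq]
    have hN : 0 < 2 ^ 2 ^ n := by positivity
    constructor
    · rintro ⟨a, b, c, ha, hba, hc, rfl, rfl⟩
      exact ⟨_, (Nat.le_mul_self_iff_exists_mul_add_s4 hN).mpr ⟨a, b, c, ha, hba, hc, rfl⟩, rfl, rfl⟩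
    · rintro ⟨m, hm, rfl, rfl⟩
      obtain ⟨a, b, c, ha, hba, hc, rfl⟩ := (Nat.le_mul_self_iff_exists_mul_add_s4 hN).mp hm
      exact ⟨a, b, c, ha, hba, hc, rfl, rfl⟩

lemma mul_nsmul_one_iff {n m : ℕ} (hm : m ≤ 2 ^ 2 ^ n) (x z : M) :
    S.Mul n x (m • S.one) z ↔ z = m • x := by
  rw [mul_iff]
  constructor
  · rintro ⟨m', -, hm', rfl⟩
    rw [S.nsmul_one_injective hm']
  · rintro rfl
    exact ⟨m, hm, rfl, rfl⟩

end PrAMinus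

theorem prAMinus_hyp_iff {M : Type*} [AddCancelCommMonoid M] (S : PrAMinus M)
    (n : ℕ) (y : M) :
    S.Hyp n y ↔ ∃ m : ℕ, m ≤ 2 ^ (2 ^ n) ∧ y = m • S.one := by
  constructor
  · rintro ⟨hone, -⟩
    obtain ⟨m, hm, hy, -⟩ := (S.mul_iff n S.one y y).mp hone
    exact ⟨m, hm, hy⟩
  · rintro ⟨m, hm, rfl⟩
    simp only [PrAMinus.Hyp, S.mul_nsmul_one_iff hm, smul_zero, existsUnique_eq, true_and,
      forall_const]
    rintro x₀ x₁ x₂ rfl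
    exact ⟨_, _, _, rfl, rfl, rfl, smul_add m x₁ x₂⟩
end

section
/- Let M be a PrA⁻-structure, Mul its bounded-multiplication relation, Hyp the associated predicate, and n : ℕ. Then an element x : M satisfies (∀ y, Hyp n y → y = 0 ∨ ∃ a₁ b₁ b₂, Mul n a₁ y b₁ ∧ x = b₁ + b₂ ∧ b₂ < y) if and only if for every natural number m with 1 ≤ m ≤ 2^(2^n) there exist a : M and a natural number r < m with x = m • a + r • one. -/
namespace PrAMinus

variable {M : Type*} [AddCancelCommMonoid M] (S : PrAMinus M)

lemma nsmul_one_ne_zero (k : ℕ) : (k + 1) • S.one ≠ 0 := by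
  rw [succ_nsmul]; exact S.succ_ne_zero _

lemma nsmul_one_inj_le {k l : ℕ} (hkl : k ≤ l) (h : k • S.one = l • S.one) : k = l := by
  have h2 : k • S.one + (l - k) • S.one = k • S.one + 0 := by
    rw [← add_nsmul, add_zero, Nat.add_sub_cancel' hkl, h]
  have h3 := add_left_cancel h2
  rcases Nat.eq_zero_or_pos (l - k) with h4 | h4
  · omega
  · obtain ⟨d, hd⟩ : ∃ d, l - k = d + 1 := ⟨l - k - 1, by omega⟩
    rw [hd] at h3
    exact absurd h3 (S.nsmul_one_ne_zero d)

lemma nsmul_one_inj {k l : ℕ} (h : k • S.one = l • S.one) : k = l := by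
  rcases le_total k l with hkl | hkl
  · exact S.nsmul_one_inj_le hkl h
  · exact (S.nsmul_one_inj_le hkl h.symm).symm

lemma lt_nsmul_one : ∀ (m : ℕ) (a : M), S.Lt a (m • S.one) → ∃ r, r < m ∧ a = r • S.one := by
  intro m
  induction m with
  | zero =>
    rintro a ⟨z, hz, hsum⟩
    rw [zero_nsmul] at hsum
    exfalso
    apply hz
    by_contra hz'
    obtain ⟨c, rfl⟩ := S.exists_pred z hz'
    rw [← add_assoc] at hsum
    exact S.succ_ne_zero _ hsum
  | succ m ih =>
    rintro a ⟨z, hz, hsum⟩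
    by_cases ha : a = 0
    · exact ⟨0, by omega, by simp [ha]⟩
    · obtain ⟨c, rfl⟩ := S.exists_pred a ha
      rw [succ_nsmul] at hsum
      have h2 : c + z + S.one = m • S.one + S.one := by
        rw [add_right_comm c z S.one]; exact hsum
      obtain ⟨r, hr, rfl⟩ := ih c ⟨z, hz, add_right_cancel h2⟩
      exact ⟨r + 1, by omega, by rw [succ_nsmul]⟩

lemma nsmul_one_lt {r m : ℕ} (h : r < m) : S.Lt (r • S.one) (m • S.one) := by
  obtain ⟨d, hd⟩ : ∃ d, m - r = d + 1 := ⟨m - r - 1, by omega⟩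
  refine ⟨(m - r) • S.one, by rw [hd]; exact S.nsmul_one_ne_zero d, ?_⟩
  rw [← add_nsmul]
  congr 1
  omega

lemma nat_decomp (B m : ℕ) (hB : 1 ≤ B) (hm : m ≤ B * B) :
    ∃ q r, q < B ∧ r ≤ B ∧ m = q * B + r := by
  rcases Nat.lt_or_ge m B with h | h
  · exact ⟨0, m, hB, by omega, by omega⟩
  · have h1 : 1 ≤ m := le_trans hB h
    refine ⟨(m - 1) / B, (m - 1) % B + 1, ?_, ?_, ?_⟩
    · have hle : (m - 1) / B * B ≤ m - 1 := Nat.div_mul_le_self _ _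
      have h2 : (m - 1) / B * B < B * B :=
        lt_of_le_of_lt hle (lt_of_lt_of_le (Nat.sub_lt h1 Nat.one_pos) hm)
      exact Nat.lt_of_mul_lt_mul_right h2
    · have := Nat.mod_lt (m - 1) (show 0 < B by omega)
      omega
    · have h3 := Nat.div_add_mod (m - 1) B
      calc m = (m - 1) + 1 := by omega
        _ = B * ((m - 1) / B) + (m - 1) % B + 1 := by rw [h3]
        _ = (m - 1) / B * B + ((m - 1) % B + 1) := by ring

lemma pow_sq (n : ℕ) : 2 ^ (2 ^ (n + 1)) = 2 ^ (2 ^ n) * 2 ^ (2 ^ n) := by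
  rw [← pow_add]
  congr 1
  rw [pow_succ]
  ring

lemma mul_nsmul' (n : ℕ) : ∀ (x : M) (m : ℕ), m ≤ 2 ^ (2 ^ n) →
    S.Mul n x (m • S.one) (m • x) := by
  induction n with
  | zero =>
    intro x m hm
    simp only [pow_zero, pow_one] at hm
    interval_cases m
    · exact Or.inl ⟨zero_nsmul _, zero_nsmul _⟩
    · exact Or.inr (Or.inl ⟨one_nsmul _, one_nsmul _⟩)
    · exact Or.inr (Or.inr ⟨two_nsmul _, two_nsmul _⟩)
  | succ n ih =>
    intro x m hm
    set B := 2 ^ (2 ^ n) with hB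
    have hBpos : 1 ≤ B := Nat.one_le_two_pow
    have hmB : m ≤ B * B := by rw [← pow_sq n]; exact hm
    obtain ⟨q, r, hq, hr, rfl⟩ := nat_decomp B _ hBpos hmB
    refine ⟨B • S.one, q • S.one, (q * B) • S.one, r • S.one, B • x, (q * B) • x, r • x,
      ?_, ?_, ?_, ?_, ?_, ?_, ?_⟩
    · rw [← add_nsmul]
    · have h := ih (B • S.one) q (le_of_lt hq)
      rwa [← mul_nsmul, Nat.mul_comm] at h
    · exact ih x B le_rfl
    · have h := ih (B • x) q (le_of_lt hq)
      rwa [← mul_nsmul, Nat.mul_comm] at h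
    · exact ih x r hr
    · rw [← add_nsmul]
    · exact S.nsmul_one_lt hq

lemma mul_spec (n : ℕ) : ∀ (x y z : M), S.Mul n x y z →
    ∃ m : ℕ, m ≤ 2 ^ (2 ^ n) ∧ y = m • S.one ∧ z = m • x := by
  induction n with
  | zero =>
    rintro x y z (⟨rfl, rfl⟩ | ⟨rfl, rfl⟩ | ⟨rfl, rfl⟩)
    · exact ⟨0, by norm_num, by simp, by simp⟩
    · exact ⟨1, by norm_num, by simp, by simp⟩
    · exact ⟨2, by norm_num, by rw [two_nsmul], by rw [two_nsmul]⟩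
  | succ n ih =>
    rintro x y z ⟨y₁, y₂, y₃, y₄, z₁, z₂, z₄, rfl, h1, h2, h3, h4, rfl, hlt⟩
    obtain ⟨m₂, hm₂, hy₂, hy₃⟩ := ih y₁ y₂ y₃ h1
    obtain ⟨m₁, hm₁, hy₁, hz₁⟩ := ih x y₁ z₁ h2
    obtain ⟨m₂', hm₂', hy₂', hz₂⟩ := ih z₁ y₂ z₂ h3
    obtain ⟨m₄, hm₄, hy₄, hz₄⟩ := ih x y₄ z₄ h4
    have e22 : m₂' = m₂ := S.nsmul_one_inj (hy₂'.symm.trans hy₂)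
    have hlt' : S.Lt y₂ (m₁ • S.one) := hy₁ ▸ hlt
    obtain ⟨rr, hrr, hre⟩ := S.lt_nsmul_one m₁ y₂ hlt'
    have hm21 : m₂ < m₁ := by
      have : rr = m₂ := S.nsmul_one_inj (hre.symm.trans hy₂)
      omega
    refine ⟨m₁ * m₂ + m₄, ?_, ?_, ?_⟩
    · rw [pow_sq n]
      nlinarith
    · rw [hy₃, hy₁, hy₄, ← mul_nsmul, ← add_nsmul]
    · rw [hz₂, hz₁, hz₄, e22, ← mul_nsmul, ← add_nsmul]

lemma hyp_iff (n : ℕ) (y : M) :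
    S.Hyp n y ↔ ∃ m : ℕ, m ≤ 2 ^ (2 ^ n) ∧ y = m • S.one := by
  constructor
  · rintro ⟨h1, -, -, -⟩
    obtain ⟨m, hm, hy, -⟩ := S.mul_spec n _ _ _ h1
    exact ⟨m, hm, hy⟩
  · rintro ⟨m, hm, rfl⟩
    refine ⟨S.mul_nsmul' n S.one m hm, ?_, ?_, ?_⟩
    · have h := S.mul_nsmul' n (0 : M) m hm
      rwa [smul_zero] at h
    · intro x
      refine ⟨m • x, S.mul_nsmul' n x m hm, ?_⟩
      intro z' hz'
      obtain ⟨m', _, hy', hz⟩ := S.mul_spec n x _ z' hz'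
      rw [hz, S.nsmul_one_inj hy'.symm]
    · intro x₀ x₁ x₂ h
      exact ⟨m • x₀, m • x₁, m • x₂, S.mul_nsmul' n x₁ m hm, S.mul_nsmul' n x₂ m hm,
        S.mul_nsmul' n x₀ m hm, by rw [h, smul_add]⟩

end PrAMinus

theorem prAMinus_div_iff {M : Type*} [AddCancelCommMonoid M] (S : PrAMinus M)
    (n : ℕ) (x : M) :
    (∀ y : M, S.Hyp n y →
        y = 0 ∨ ∃ a₁ b₁ b₂ : M, S.Mul n a₁ y b₁ ∧ x = b₁ + b₂ ∧ S.Lt b₂ y) ↔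
      ∀ m : ℕ, 1 ≤ m → m ≤ 2 ^ (2 ^ n) →
        ∃ (a : M) (r : ℕ), r < m ∧ x = m • a + r • S.one := by
  constructor
  · intro h m hm1 hm2
    have hy := h (m • S.one) ((S.hyp_iff n _).2 ⟨m, hm2, rfl⟩)
    rcases hy with h0 | ⟨a₁, b₁, b₂, hmul, hx, hlt⟩
    · obtain ⟨d, rfl⟩ : ∃ d, m = d + 1 := ⟨m - 1, by omega⟩
      exact absurd h0 (S.nsmul_one_ne_zero d)
    · obtain ⟨m', _, hy', hb₁⟩ := S.mul_spec n a₁ _ b₁ hmul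
      have hm' : m' = m := S.nsmul_one_inj hy'.symm
      obtain ⟨r, hr, rfl⟩ := S.lt_nsmul_one m b₂ hlt
      exact ⟨a₁, r, hr, by rw [hx, hb₁, hm']⟩
  · intro h y hy
    obtain ⟨m, hm, rfl⟩ := (S.hyp_iff n y).1 hy
    rcases Nat.eq_zero_or_pos m with rfl | hm1
    · left; simp
    · right
      obtain ⟨a, r, hr, hx⟩ := h m hm1 hm
      exact ⟨a, m • a, r • S.one, S.mul_nsmul' n a m hm, hx, S.nsmul_one_lt hr⟩
end

section
/- For every prime number p, there exists a PrA⁻-structure M such that: (i) for every natural number m with 1 ≤ m < p and every x : M, there exist z : M and a natural number r < m with (m • z + r • one = x) ∨ (m • z + x = r • one); and (ii) there exists x : M such that for all z : M and all natural numbers r < p, ¬((p • z + r • one = x) ∨ (p • z + x = r • one)). -/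
/-!
The model is the nonnegative cone of the lexicographically ordered group `G ×ₗ ℤ`, where `G` is the
group of rationals whose denominator is prime to `p`, with `one = (0, 1)`. The nonnegative cone of any
linearly ordered group with a least positive element satisfies the `PrA⁻` axioms. Division by `m`
with remainder works coordinatewise, exactly in `G` (possible when `m` is prime to `p`) and
Euclidean in `ℤ`; the element `(1, 0)` is not divisible with remainder by `p` because `±1/p ∉ G`.
-/

section LeastPositive

variable {Γ : Type*} [AddCommGroup Γ] [LinearOrder Γ] [IsOrderedAddMonoid Γ] {e : Γ}

def PrAMinus.ofLeastPos (he : ∀ x : Γ, 0 < x ↔ e ≤ x) : PrAMinus {x : Γ // 0 ≤ x} where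
  one := ⟨e, ((he e).2 le_rfl).le⟩
  succ_ne_zero x h :=
    (add_pos_of_nonneg_of_pos x.2 ((he e).2 le_rfl)).ne' (congrArg Subtype.val h)
  exists_pred x hx := by
    have hpos : 0 < (x : Γ) := x.2.lt_of_ne fun h => hx (Subtype.ext h.symm)
    exact ⟨⟨x - e, sub_nonneg.2 ((he x).1 hpos)⟩, Subtype.ext (sub_add_cancel _ _).symm⟩
  total x y := (le_total (x : Γ) y).imp
    (fun h => ⟨⟨y - x, sub_nonneg.2 h⟩, Subtype.ext (add_sub_cancel _ _)⟩)
    (fun h => ⟨⟨x - y, sub_nonneg.2 h⟩, Subtype.ext (add_sub_cancel _ _)⟩)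

theorem nonneg_of_nsmul_add_nsmul_nonneg (he : ∀ x : Γ, 0 < x ↔ e ≤ x) {m r : ℕ} (hr : r < m)
    {z : Γ} (h : 0 ≤ m • z + r • e) : 0 ≤ z := by
  by_contra! hz
  have hze : z + e ≤ 0 := by
    simpa [add_comm] using sub_nonpos.2 ((he (-z)).1 (neg_pos.2 hz))
  obtain ⟨k, rfl⟩ : ∃ k, m = r + (k + 1) := ⟨m - r - 1, by omega⟩
  have hsplit : (r + (k + 1)) • z + r • e = r • (z + e) + (k + 1) • z := by
    rw [add_nsmul, nsmul_add]
    abel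
  rw [hsplit] at h
  exact h.not_gt (add_neg_of_nonpos_of_neg (nsmul_nonpos hze r) (nsmul_neg hz k.succ_ne_zero))

theorem PrAMinus.ofLeastPos_exists_nsmul_add_nsmul_one_eq (he : ∀ x : Γ, 0 < x ↔ e ≤ x)
    {m : ℕ} (x : {x : Γ // 0 ≤ x}) (hx : ∃ (z : Γ) (r : ℕ), r < m ∧ m • z + r • e = x) :
    ∃ z r, r < m ∧ m • z + r • (ofLeastPos he).one = x := by
  obtain ⟨z, r, hr, hzr⟩ := hx
  refine ⟨⟨z, nonneg_of_nsmul_add_nsmul_nonneg he hr (hzr ▸ x.2)⟩, r, hr, Subtype.ext ?_⟩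
  simpa [ofLeastPos] using hzr

end LeastPositive

@[simp]
theorem ofLex_nsmul {α : Type*} [AddMonoid α] (n : ℕ) (x : Lex α) : ofLex (n • x) = n • ofLex x :=
  rfl

namespace Prod.Lex

theorem pos_iff_toLex_zero_one_le {G : Type*} [AddMonoid G] [LinearOrder G] (x : G ×ₗ ℤ) :
    0 < x ↔ toLex ((0 : G), (1 : ℤ)) ≤ x := by
  obtain ⟨⟨a, b⟩, rfl⟩ := toLex.surjective x
  show toLex (0, 0) < toLex (a, b) ↔ _
  rw [toLex_lt_toLex, toLex_le_toLex, Int.lt_iff_add_one_le, zero_add]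

theorem exists_nsmul_add_nsmul_toLex_zero_one_eq {G : Type*} [AddMonoid G] {m : ℕ} (hm : 0 < m)
    (hG : ∀ a : G, ∃ c, m • c = a) (x : G ×ₗ ℤ) :
    ∃ (z : G ×ₗ ℤ) (r : ℕ), r < m ∧ m • z + r • toLex ((0 : G), (1 : ℤ)) = x := by
  obtain ⟨⟨a, b⟩, rfl⟩ := toLex.surjective x
  obtain ⟨c, rfl⟩ := hG a
  have hm' : (0 : ℤ) < m := by exact_mod_cast hm
  have hmod := Int.emod_nonneg b hm'.ne'
  refine ⟨toLex (c, b / m), (b % m).toNat, by have := Int.emod_lt_of_pos b hm'; omega, ?_⟩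
  apply ofLex.injective
  ext
  · simp
  · simp [Int.toNat_of_nonneg hmod, Int.mul_ediv_add_emod]

theorem nsmul_add_nsmul_toLex_zero_one_ne {G : Type*} [AddGroup G] {p : ℕ} {g : G}
    (hg : ∀ c : G, p • c ≠ g) (z : G ×ₗ ℤ) (r : ℕ) :
    p • z + r • toLex ((0 : G), (1 : ℤ)) ≠ toLex (g, 0) ∧
      p • z + toLex (g, 0) ≠ r • toLex ((0 : G), (1 : ℤ)) := by
  obtain ⟨⟨c, b⟩, rfl⟩ := toLex.surjective z
  constructor
  · intro h
    exact hg c (by simpa using congrArg (fun y => (ofLex y).1) h)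
  · intro h
    have hfst : p • c + g = 0 := by simpa using congrArg (fun y => (ofLex y).1) h
    exact hg (-c) (by rw [neg_nsmul]; exact neg_eq_of_add_eq_zero_right hfst)

end Prod.Lex

def ratDenCoprime (p : ℕ) : AddSubgroup ℚ where
  carrier := {q | q.den.Coprime p}
  zero_mem' := Nat.coprime_one_left p
  add_mem' {a b} ha hb := (Nat.Coprime.mul_left ha hb).coprime_dvd_left (Rat.add_den_dvd a b)
  neg_mem' {a} ha := by simpa [Rat.neg_den] using ha

namespace ratDenCoprime

variable {p : ℕ}

theorem exists_nsmul_eq {m : ℕ} (hm : 0 < m) (hmp : m.Coprime p) (a : ratDenCoprime p) :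
    ∃ c : ratDenCoprime p, m • c = a := by
  have hden : ((a : ℚ) * (m : ℚ)⁻¹).den.Coprime p := by
    refine (Nat.Coprime.mul_left a.2 ?_).coprime_dvd_left (Rat.mul_den_dvd _ _)
    simpa [Rat.inv_natCast_den, hm.ne'] using hmp
  refine ⟨⟨_, hden⟩, Subtype.ext ?_⟩
  rw [AddSubgroup.coe_nsmul, nsmul_eq_mul]
  field_simp

theorem nsmul_ne_one (hp : p ≠ 1) (c : ratDenCoprime p) : p • c ≠ ⟨1, Nat.coprime_one_left p⟩ := by
  intro h
  have hc : p * (c : ℚ) = 1 := by simpa [nsmul_eq_mul] using congrArg Subtype.val h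
  have hp0 : (p : ℚ) ≠ 0 := left_ne_zero_of_mul_eq_one hc
  have hc' : (c : ℚ) = (p : ℚ)⁻¹ := eq_inv_of_mul_eq_one_right hc
  have hden : ((p : ℚ)⁻¹).den.Coprime p := hc' ▸ c.2
  rw [Rat.inv_natCast_den, if_neg (by exact_mod_cast hp0), Nat.coprime_self] at hden
  exact hp hden

end ratDenCoprime

theorem exists_prAMinus_model_failing_div_by_p (p : ℕ) (hp : p.Prime) :
    ∃ (M : Type) (_ : AddCancelCommMonoid M) (S : PrAMinus M),
      (∀ m : ℕ, 1 ≤ m → m < p → ∀ x : M,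
        ∃ (z : M) (r : ℕ), r < m ∧ (m • z + r • S.one = x ∨ m • z + x = r • S.one)) ∧
      (∃ x : M, ∀ (z : M) (r : ℕ), r < p →
        ¬(p • z + r • S.one = x ∨ p • z + x = r • S.one)) := by
  let G := ratDenCoprime p
  let S := PrAMinus.ofLeastPos (Prod.Lex.pos_iff_toLex_zero_one_le (G := G))
  refine ⟨{x : G ×ₗ ℤ // 0 ≤ x}, inferInstance, S, ?_, ?_⟩
  · intro m hm hmp x
    have hcop : m.Coprime p := (hp.coprime_iff_not_dvd.2 (Nat.not_dvd_of_pos_of_lt hm hmp)).symm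
    obtain ⟨z, r, hr, h⟩ := PrAMinus.ofLeastPos_exists_nsmul_add_nsmul_one_eq _ x
      (Prod.Lex.exists_nsmul_add_nsmul_toLex_zero_one_eq hm
        (ratDenCoprime.exists_nsmul_eq hm hcop) x)
    exact ⟨z, r, hr, Or.inl h⟩
  · let one : G := ⟨1, Nat.coprime_one_left p⟩
    have hx : (0 : G ×ₗ ℤ) ≤ toLex (one, 0) :=
      Prod.Lex.toLex_le_toLex.2 (Or.inl (zero_lt_one (α := ℚ)))
    refine ⟨⟨_, hx⟩, fun z r _ h => ?_⟩
    obtain ⟨h₁, h₂⟩ := Prod.Lex.nsmul_add_nsmul_toLex_zero_one_ne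
      (ratDenCoprime.nsmul_ne_one hp.ne_one) z.1 r
    exact h.elim (fun h => h₁ (congrArg Subtype.val h)) fun h => h₂ (congrArg Subtype.val h)
end

section
/- Let K be a subfield of the real numbers ℝ and let y be a natural number with y ≥ 2. Then: (i) there exists x ∈ K with 1 < x and x^y ≤ 2; (ii) for all x ∈ K with 1 < x one has x < x^y, and for all x, x₁ ∈ K with 1 < x and 1 < x₁, if x^y < x₁^y then x < x₁; (iii) for all c₁, c₂ ∈ K with 1 < c₁, 1 < c₂ and c₁ ≠ c₂, there exists x₀ ∈ K with 1 < x₀ such that x₀^y lies strictly between c₁ and c₂, i.e. (c₁ < x₀^y ∧ x₀^y < c₂) ∨ (c₂ < x₀^y ∧ x₀^y < c₁). -/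
theorem SubfieldClass.exists_one_lt_mem_pow_btwn {F S : Type*} [Field F] [LinearOrder F]
    [IsStrictOrderedRing F] [Archimedean F] [SetLike S F] [SubfieldClass S F] (K : S)
    {n : ℕ} (hn : n ≠ 0) {a b : F} (ha : 1 ≤ a) (hab : a < b) :
    ∃ x ∈ K, 1 < x ∧ a < x ^ n ∧ x ^ n < b := by
  obtain ⟨q, hq, haq, hqb⟩ := exists_rat_pow_btwn hn hab (zero_lt_one.trans_le ha |>.trans hab)
  have hq_one : 1 < (q : F) :=
    (one_lt_pow_iff_of_nonneg (by positivity) hn).mp (ha.trans_lt haq)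
  exact ⟨q, SubfieldClass.ratCast_mem K q, hq_one, haq, hqb⟩

theorem subfield_satisfies_root_hypotheses (K : Subfield ℝ) (y : ℕ) (hy : 2 ≤ y) :
    (∃ x ∈ K, 1 < x ∧ x ^ y ≤ 2) ∧
      (∀ x ∈ K, 1 < x → x < x ^ y) ∧
      (∀ x ∈ K, ∀ x₁ ∈ K, 1 < x → 1 < x₁ → x ^ y < x₁ ^ y → x < x₁) ∧
      (∀ c₁ ∈ K, ∀ c₂ ∈ K, 1 < c₁ → 1 < c₂ → c₁ ≠ c₂ →
        ∃ x₀ ∈ K, 1 < x₀ ∧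
          ((c₁ < x₀ ^ y ∧ x₀ ^ y < c₂) ∨ (c₂ < x₀ ^ y ∧ x₀ ^ y < c₁))) := by
  have hy₀ : y ≠ 0 := by omega
  refine ⟨?_, fun x _ hx ↦ lt_self_pow₀ hx (by omega),
    fun x _ x₁ _ _ hx₁ h ↦ lt_of_pow_lt_pow_left₀ y (zero_le_one.trans hx₁.le) h, ?_⟩
  · obtain ⟨x, hxK, hx, -, hx2⟩ :=
      SubfieldClass.exists_one_lt_mem_pow_btwn K hy₀ le_rfl one_lt_two
    exact ⟨x, hxK, hx, hx2.le⟩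
  · intro c₁ _ c₂ _ hc₁ hc₂ hne
    rcases hne.lt_or_gt with h | h
    · obtain ⟨x, hxK, hx, hcx, hxc⟩ :=
        SubfieldClass.exists_one_lt_mem_pow_btwn K hy₀ hc₁.le h
      exact ⟨x, hxK, hx, .inl ⟨hcx, hxc⟩⟩
    · obtain ⟨x, hxK, hx, hcx, hxc⟩ :=
        SubfieldClass.exists_one_lt_mem_pow_btwn K hy₀ hc₂.le h
      exact ⟨x, hxK, hx, .inr ⟨hcx, hxc⟩⟩
end

section
/- For every odd prime p, there exists a subfield K of the real numbers ℝ such that: (i) for every z ∈ K with 0 ≤ z there exists x ∈ K with x^2 = z; (ii) for every odd natural number m < p and all coefficients a₀, …, a_{m−1} ∈ K, there exists x ∈ K with x^m + a_{m−1}·x^{m−1} + ⋯ + a₁·x + a₀ = 0; and (iii) there is no r ∈ K with r^p = 2. -/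
/-!
Let `c = 2^(1/p)` and use Zorn's lemma to pick a subfield `M` of `ℝ` maximal among those not
containing `c`. If `x ∉ M` is algebraic over `M`, then `M(x)` is strictly larger than `M`, so it
contains `c`, and `p = [M(c) : M]` divides `[M(x) : M]`; here `X^p - 2` is irreducible over `M`
because its only real root `c` is not in `M`. Hence every root of a polynomial over `M` of degree
`< p` lies in `M`, which gives square roots of nonnegative elements, and roots of odd-degree
polynomials of degree `< p` since such polynomials have real roots.
-/

open Polynomial IntermediateField

theorem Real.exists_isRoot_of_odd_natDegree {f : ℝ[X]} (hf : Odd f.natDegree) :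
    ∃ x, f.IsRoot x := by
  induction f using WfDvdMonoid.induction_on_irreducible with
  | zero => simp at hf
  | unit u hu => simp [natDegree_eq_zero_of_isUnit hu] at hf
  | mul a i ha hi ih =>
    rw [natDegree_mul hi.ne_zero ha, Nat.odd_add] at hf
    by_cases hi_odd : Odd i.natDegree
    · have hi_lin : i.natDegree = 1 := by
        have := hi.natDegree_le_two
        obtain ⟨k, hk⟩ := hi_odd
        omega
      obtain ⟨x, hx⟩ := exists_root_of_degree_eq_one
        ((degree_eq_iff_natDegree_eq_of_pos one_pos).2 hi_lin)
      exact ⟨x, root_mul.2 (.inl hx)⟩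
    · obtain ⟨x, hx⟩ := ih (Nat.not_even_iff_odd.1 (mt hf.2 hi_odd))
      exact ⟨x, root_mul.2 (.inr hx)⟩

theorem irrational_of_pow_eq_two {x : ℝ} {n : ℕ} (hn : 2 ≤ n) (hx : x ^ n = 2) :
    Irrational x := by
  have : Fact (Nat.Prime 2) := ⟨Nat.prime_two⟩
  refine irrational_nrt_of_n_not_dvd_multiplicity n two_ne_zero 2 (by exact_mod_cast hx) ?_
  rw [Nat.cast_ofNat, multiplicity_self, Nat.one_mod_eq_one.2 (by omega)]
  exact one_ne_zero

theorem minpoly_eq_X_pow_sub_C_of_prime {K L : Type*} [Field K] [Field L] [Algebra K L] {p : ℕ}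
    (hp : p.Prime) {a : K} (hroot : ∀ b : K, b ^ p ≠ a) {c : L}
    (hc : c ^ p = algebraMap K L a) : minpoly K c = X ^ p - C a :=
  (minpoly.eq_of_irreducible_of_monic (X_pow_sub_C_irreducible_of_prime hp hroot)
    (by simp [hc]) (monic_X_pow_sub_C a hp.ne_zero)).symm

namespace Subfield

variable {L : Type*} [Field L] {c x : L} {M : Subfield L}

theorem exists_le_maximal_notMem {K : Subfield L} (hc : c ∉ K) :
    ∃ M, K ≤ M ∧ Maximal (fun F : Subfield L => c ∉ F) M := by
  refine zorn_le_nonempty₀ _ (fun C hCc hC F hF => ⟨sSup C, ?_, fun _ => le_sSup⟩) K hc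
  change c ∉ sSup C
  rw [mem_sSup_of_directedOn ⟨F, hF⟩ hC.directedOn]
  rintro ⟨F', hF', hcF'⟩
  exact hCc hF' hcF'

theorem natDegree_minpoly_dvd_of_maximal_notMem (hM : Maximal (fun F : Subfield L => c ∉ F) M)
    (hx : IsIntegral M x) (hxM : x ∉ M) :
    (minpoly M c).natDegree ∣ (minpoly M x).natDegree := by
  have hcF : c ∈ M⟮x⟯ := by
    by_contra hcF
    exact hxM (hM.2 (y := M⟮x⟯.toSubfield) hcF (fun y hy => M⟮x⟯.algebraMap_mem ⟨y, hy⟩)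
      (mem_adjoin_simple_self M x))
  have := adjoin.finiteDimensional hx
  have hmin : minpoly M c = minpoly M (⟨c, hcF⟩ : M⟮x⟯) :=
    minpoly.algHom_eq M⟮x⟯.val Subtype.val_injective ⟨c, hcF⟩
  rw [hmin, ← adjoin.finrank hx]
  exact minpoly.degree_dvd (IsIntegral.of_finite M _)

theorem mem_of_aeval_eq_zero_of_maximal_notMem (hM : Maximal (fun F : Subfield L => c ∉ F) M)
    {f : M[X]} (hf : f ≠ 0) (hdeg : f.natDegree < (minpoly M c).natDegree)
    (hfx : aeval x f = 0) : x ∈ M := by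
  by_contra hxM
  have hx : IsIntegral M x := IsAlgebraic.isIntegral ⟨f, hf, hfx⟩
  have hle : (minpoly M x).natDegree ≤ f.natDegree :=
    natDegree_le_of_dvd (minpoly.dvd M x hfx) hf
  have := Nat.le_of_dvd (minpoly.natDegree_pos hx)
    (natDegree_minpoly_dvd_of_maximal_notMem hM hx hxM)
  omega

end Subfield

theorem Subfield.exists_root_mem_of_odd_natDegree {c : ℝ} {M : Subfield ℝ}
    (hM : Maximal (fun F : Subfield ℝ => c ∉ F) M) {f : M[X]} (hf : Odd f.natDegree)
    (hdeg : f.natDegree < (minpoly M c).natDegree) : ∃ x ∈ M, aeval x f = 0 := by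
  obtain ⟨x, hx⟩ := Real.exists_isRoot_of_odd_natDegree (f := f.map (algebraMap M ℝ))
    (by rwa [natDegree_map])
  have hfx : aeval x f = 0 := by rwa [aeval_def, eval₂_eq_eval_map]
  have hf0 : f ≠ 0 := by
    rintro rfl
    simp at hf
  exact ⟨x, M.mem_of_aeval_eq_zero_of_maximal_notMem hM hf0 hdeg hfx, hfx⟩

theorem exists_real_subfield_weak_rcf_without_pth_root_of_two (p : ℕ)
    (hp : p.Prime) (hodd : Odd p) :
    ∃ K : Subfield ℝ,
      (∀ z ∈ K, 0 ≤ z → ∃ x ∈ K, x ^ 2 = z) ∧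
      (∀ m : ℕ, Odd m → m < p → ∀ a : Fin m → ℝ, (∀ i, a i ∈ K) →
        ∃ x ∈ K, x ^ m + ∑ i : Fin m, a i * x ^ (i : ℕ) = 0) ∧
      (∀ r ∈ K, r ^ p ≠ 2) := by
  have hp3 : 3 ≤ p := by
    obtain ⟨k, rfl⟩ := hodd
    have := hp.two_le
    omega
  set c : ℝ := 2 ^ (p : ℝ)⁻¹
  have hc : c ^ p = 2 := Real.rpow_inv_natCast_pow zero_le_two hp.ne_zero
  have hc_unique : ∀ r : ℝ, r ^ p = 2 → r = c :=
    fun r hr => hodd.strictMono_pow.injective (hr.trans hc.symm)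
  obtain ⟨M, -, hM⟩ := Subfield.exists_le_maximal_notMem (K := (algebraMap ℚ ℝ).fieldRange)
    (c := c) (by rintro ⟨q, hq⟩; exact irrational_of_pow_eq_two hp.two_le hc ⟨q, hq⟩)
  have hcM : c ∉ M := hM.prop
  have hdeg : (minpoly M c).natDegree = p := by
    rw [minpoly_eq_X_pow_sub_C_of_prime hp (a := ⟨2, ofNat_mem M 2⟩) ?_ hc, natDegree_X_pow_sub_C]
    intro b hb
    exact hcM (hc_unique b (congrArg Subtype.val hb) ▸ b.2)
  refine ⟨M, fun z hz hz0 => ⟨√z, ?_, Real.sq_sqrt hz0⟩, fun m hm hmp a ha => ?_,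
    fun r hr hrp => hcM (hc_unique r hrp ▸ hr)⟩
  · exact M.mem_of_aeval_eq_zero_of_maximal_notMem hM (f := X ^ 2 - C ⟨z, hz⟩)
      (X_pow_sub_C_ne_zero two_pos _) (by rw [natDegree_X_pow_sub_C, hdeg]; omega)
      (by simp [hz0, Subfield.algebraMap_ofSubfield])
  · set q : M[X] := X ^ m + ∑ i : Fin m, C ⟨a i, ha i⟩ * X ^ (i : ℕ)
    have hq : q.natDegree = m := by
      rw [natDegree_add_eq_left_of_degree_lt (by simpa using degree_sum_fin_lt _), natDegree_X_pow]
    obtain ⟨x, hxM, hx⟩ := M.exists_root_mem_of_odd_natDegree hM (hq ▸ hm) (by omega)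
    exact ⟨x, hxM, by simpa [q, Subfield.algebraMap_ofSubfield] using hx⟩
end

section
/- Let T be a finite set of natural numbers, let D be a natural number with D ≥ 1, and let F : ℕ → Prop be a predicate such that for all a, b : ℕ, if a ≡ b (mod D) and for every t ∈ T both (t ≤ a ↔ t ≤ b) and (a ≤ t ↔ b ≤ t), then F a ↔ F b. Then (∃ y, F y) holds if and only if there exist t ∈ T ∪ {0} and a natural number r ≤ D such that F (t + r). -/
theorem cooper_step_five (T : Finset ℕ) (D : ℕ) (hD : 1 ≤ D) (F : ℕ → Prop)
    (hF : ∀ a b : ℕ, a ≡ b [MOD D] →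
      (∀ t ∈ T, (t ≤ a ↔ t ≤ b) ∧ (a ≤ t ↔ b ≤ t)) → (F a ↔ F b)) :
    (∃ y : ℕ, F y) ↔ ∃ t ∈ insert 0 T, ∃ r ≤ D, F (t + r) := by
  constructor
  · rintro ⟨y, hy⟩
    set S := (insert 0 T).filter (· ≤ y) with hSdef
    have hS : S.Nonempty := ⟨0, by simp [hSdef]⟩
    set t := S.max' hS with htdef
    have htS := S.max'_mem hS
    rw [Finset.mem_filter] at htS
    obtain ⟨ht_mem, hty⟩ := htS
    have hmax : ∀ s ∈ T, s ≤ y → s ≤ t := fun s hs hsy =>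
      S.le_max' s (Finset.mem_filter.mpr ⟨Finset.mem_insert_of_mem hs, by simpa⟩)
    set d := y - t with hddef
    have hyd : y = t + d := by omega
    by_cases hd : d ≤ D
    · exact ⟨t, ht_mem, d, hd, by rwa [← hyd]⟩
    · push_neg at hd
      set r := if d % D = 0 then D else d % D with hrdef
      have hrd : r ≡ d [MOD D] := by
        by_cases h0 : d % D = 0
        · simp only [hrdef, h0, if_true]
          have : d ≡ 0 [MOD D] := (Nat.modEq_zero_iff_dvd).mpr (Nat.dvd_of_mod_eq_zero h0)
          calc D ≡ 0 [MOD D] := (Nat.modEq_zero_iff_dvd).mpr dvd_rfl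
            _ ≡ d [MOD D] := this.symm
        · simp only [hrdef, h0, if_false]
          exact Nat.mod_modEq d D
      have hr1 : 1 ≤ r := by
        by_cases h0 : d % D = 0 <;> simp only [hrdef, h0, if_true, if_false] <;> omega
      have hrD : r ≤ D := by
        have := Nat.mod_lt d (show 0 < D by omega)
        by_cases h0 : d % D = 0 <;> simp only [hrdef, h0, if_true, if_false] <;> omega
      have hmod : t + r ≡ y [MOD D] := by
        rw [hyd]; exact Nat.ModEq.add_left t hrd
      have hlt : t + r < y := by omega
      refine ⟨t, ht_mem, r, hrD, (hF (t + r) y hmod ?_).mpr hy⟩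
      intro s hs
      by_cases hsy : s ≤ y
      · have hst := hmax s hs hsy
        constructor <;> constructor <;> intro <;> omega
      · constructor <;> constructor <;> intro <;> omega
  · rintro ⟨t, _, r, _, h⟩
    exact ⟨t + r, h⟩
end
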